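/- The insertion node u of any inclusion-minimal constrained cograph completion of G+x has at least one hollow child and at least one non-hollow child in the cotree T of G; in particular u is non-hollow and non-completion-forced. -/

import Mathlib

universe u

def IsCograph {α : Type*} (G : SimpleGraph α) : Prop :=
  ¬ ∃ f : Fin 4 → α, Function.Injective f ∧
      ∀ i j : Fin 4, G.Adj (f i) (f j) ↔ (i.val + 1 = j.val ∨ j.val + 1 = i.val)

inductive Cotree (V : Type u) : Type u where
  | leaf : V → Cotree V
  | node : Bool → List (Cotree V) → Cotree V

namespace Cotree

variable {V : Type u}

def leaves : Cotree V → List V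
  | .leaf v => [v]
  | .node _ ts => ts.attach.flatMap (fun t => t.1.leaves)

decreasing_by simp_wf; have := List.sizeOf_lt_of_mem t.2; omega

def subtrees : Cotree V → List (Cotree V)
  | .leaf v => [.leaf v]
  | .node b ts => .node b ts :: ts.attach.flatMap (fun t => t.1.subtrees)

decreasing_by simp_wf; have := List.sizeOf_lt_of_mem t.2; omega

def children : Cotree V → List (Cotree V)
  | .leaf _ => []
  | .node _ ts => ts

def isSeries : Cotree V → Prop
  | .node true _ => True
  | _ => False

def isParallel : Cotree V → Prop
  | .node false _ => True
  | _ => False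

def adj : Cotree V → V → V → Prop
  | .leaf _, _, _ => False
  | .node b ts, x, y =>
      (∃ t ∈ ts.attach, adj t.1 x y) ∨
      (b = true ∧ ∃ t ∈ ts.attach, ∃ s ∈ ts.attach,
        t.1 ≠ s.1 ∧ x ∈ t.1.leaves ∧ y ∈ s.1.leaves)

decreasing_by simp_wf; have := List.sizeOf_lt_of_mem t.2; omega

def valid : Cotree V → Prop
  | .leaf _ => True
  | .node b ts => 2 ≤ ts.length ∧ ∀ t ∈ ts.attach, valid t.1 ∧
      ∀ b' ts', t.1 = .node b' ts' → b' ≠ b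

decreasing_by simp_wf; have := List.sizeOf_lt_of_mem t.2; omega

def hollow (N : Set V) (t : Cotree V) : Prop := ∀ v ∈ t.leaves, v ∉ N
def full (N : Set V) (t : Cotree V) : Prop := ∀ v ∈ t.leaves, v ∈ N
def uniform (N : Set V) (t : Cotree V) : Prop := full N t ∨ hollow N t
def mixed (N : Set V) (t : Cotree V) : Prop := ¬ uniform N t

def forced (N : Set V) : Cotree V → Prop
  | .leaf v => v ∈ N
  | .node b ts =>
      full N (.node b ts) ∨
      (b = false ∧ ∀ t ∈ ts, ¬ hollow N t) ∨
      (b = true ∧ ∀ t ∈ ts.attach, forced N t.1)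

decreasing_by simp_wf; have := List.sizeOf_lt_of_mem t.2; omega

def eligible (N : Set V) : Cotree V → Cotree V → Prop
  | .leaf v, u => u = .leaf v
  | .node b ts, u => u = .node b ts ∨
      ∃ t ∈ ts.attach, eligible N t.1 u ∧
        (b = false → ∀ s ∈ ts, s ≠ t.1 → hollow N s)

decreasing_by simp_wf; have := List.sizeOf_lt_of_mem t.2; omega

def IsLcaLeaves (T u : Cotree V) (x y : V) : Prop :=
  u ∈ T.subtrees ∧ x ∈ u.leaves ∧ y ∈ u.leaves ∧
    ∀ c ∈ u.children, ¬ (x ∈ c.leaves ∧ y ∈ c.leaves)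

def IsLcaNodeLeaf (T w u : Cotree V) (y : V) : Prop :=
  w ∈ T.subtrees ∧ u ∈ w.subtrees ∧ y ∈ w.leaves ∧
    ∀ c ∈ w.children, ¬ (u ∈ c.subtrees ∧ y ∈ c.leaves)

def graphOf (T : Cotree V) : SimpleGraph V :=
  SimpleGraph.fromRel (fun a b => T.adj a b)

def graphPlus (T : Cotree V) (N : Set V) : SimpleGraph (Option V) :=
  SimpleGraph.fromRel (fun a b =>
    match a, b with
    | some u, some v => T.adj u v
    | none, some v => v ∈ N
    | _, _ => False)

def IsConstrainedCompletion (T : Cotree V) (Nx N' : Set V) : Prop :=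
  Nx ⊆ N' ∧ (∀ v ∈ N', v ∈ T.leaves) ∧ IsCograph (graphPlus T N')

def IsMinimalConstrainedCompletion (T : Cotree V) (Nx N' : Set V) : Prop :=
  IsConstrainedCompletion T Nx N' ∧
    ∀ N'' ⊆ N', IsConstrainedCompletion T Nx N'' → N'' = N'

def IsInsertionNode (T : Cotree V) (N' : Set V) (u : Cotree V) : Prop :=
  u ∈ T.subtrees ∧ mixed N' u ∧ (∀ c ∈ u.children, uniform N' c) ∧
    ∀ y ∈ T.leaves, y ∉ u.leaves →
      (y ∈ N' ↔ ∃ w, IsLcaNodeLeaf T w u y ∧ w.isSeries)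

def IsCMInsertionNode (T : Cotree V) (Nx : Set V) (u : Cotree V) : Prop :=
  ∃ N', IsMinimalConstrainedCompletion T Nx N' ∧ IsInsertionNode T N' u

def anchored (T u : Cotree V) (Nx : Set V) : Set V :=
  Nx ∪ {y | y ∈ T.leaves ∧ y ∉ u.leaves ∧ ∃ w, IsLcaNodeLeaf T w u y ∧ w.isSeries}
     ∪ {y | ∃ c ∈ u.children, ¬ hollow Nx c ∧ y ∈ c.leaves}

end Cotree

/-!
Some child of the insertion node `u` avoids the completed neighbourhood `N'`, hence `N(x)`: `u` is
mixed and its children are uniform. If `u` were hollow, removing the leaves of `u` from `N'` would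
give a smaller completion. Outside `u`, `N'` consists exactly of the vertices adjacent to the module
`V(u)`, so after the removal `V(u) ∪ {x}` is a module of `G + x` in which `x` is isolated; as `P₄` is
prime, no induced `P₄` meets both `x` and `V(u)`, and every other `P₄` was already present. Hence `u`
is non-hollow and has a non-hollow child, while its hollow child defeats every clause of `forced`.
-/

section InducedP4

variable {α : Type*}

def IsInducedP4 (G : SimpleGraph α) (f : Fin 4 → α) : Prop :=
  Function.Injective f ∧
    ∀ i j : Fin 4, G.Adj (f i) (f j) ↔ (i.val + 1 = j.val ∨ j.val + 1 = i.val)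

def SimpleGraph.IsModule (G : SimpleGraph α) (S : Set α) : Prop :=
  ∀ y ∉ S, ∀ a ∈ S, ∀ b ∈ S, G.Adj y a → G.Adj y b

theorem isCograph_iff_forall_not_isInducedP4 {G : SimpleGraph α} :
    IsCograph G ↔ ∀ f, ¬ IsInducedP4 G f :=
  not_exists

set_option synthInstance.maxSize 1000 in
theorem pathFour_eq_univ_of_isModule : ∀ S : Finset (Fin 4),
    (∀ k ∉ S, ∀ a ∈ S, ∀ b ∈ S,
      (k.val + 1 = a.val ∨ a.val + 1 = k.val) → (k.val + 1 = b.val ∨ b.val + 1 = k.val)) →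
    ∀ i ∈ S, ∀ j ∈ S, i ≠ j → ∀ k, k ∈ S := by
  decide

theorem IsInducedP4.mem_of_isModule {G : SimpleGraph α} {f : Fin 4 → α} (hf : IsInducedP4 G f)
    {S : Set α} (hS : G.IsModule S) {i j : Fin 4} (hi : f i ∈ S) (hj : f j ∈ S) (hij : i ≠ j)
    (k : Fin 4) : f k ∈ S := by
  classical
  have hmod : ∀ k ∉ Finset.univ.filter (f · ∈ S), ∀ a ∈ Finset.univ.filter (f · ∈ S),
      ∀ b ∈ Finset.univ.filter (f · ∈ S),
      (k.val + 1 = a.val ∨ a.val + 1 = k.val) → (k.val + 1 = b.val ∨ b.val + 1 = k.val) := by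
    simp only [Finset.mem_filter, Finset.mem_univ, true_and, ← hf.2]
    exact fun k hk a ha b hb => hS _ hk _ ha _ hb
  simpa using pathFour_eq_univ_of_isModule _ hmod i (by simpa) j (by simpa) hij k

theorem IsInducedP4.eq_of_isModule {G : SimpleGraph α} {f : Fin 4 → α} (hf : IsInducedP4 G f)
    {S : Set α} (hS : G.IsModule S) {x : α} (hxS : x ∈ S) (hx : ∀ y ∈ S, ¬ G.Adj x y)
    {i j : Fin 4} (hi : f i = x) (hj : f j ∈ S) : j = i := by
  by_contra hji
  obtain ⟨k, hik⟩ : ∃ k : Fin 4, i.val + 1 = k.val ∨ k.val + 1 = i.val := by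
    fin_cases i <;> decide
  exact hx (f k) (hf.mem_of_isModule hS (hi ▸ hxS) hj (Ne.symm hji) k) (hi ▸ (hf.2 i k).2 hik)

end InducedP4

namespace Cotree

variable {V : Type u}

@[elab_as_elim]
theorem ind {motive : Cotree V → Prop} (leaf : ∀ v, motive (.leaf v))
    (node : ∀ b ts, (∀ t ∈ ts, motive t) → motive (.node b ts)) : ∀ T, motive T
  | .leaf v => leaf v
  | .node b ts => node b ts fun t _ => ind leaf node t
decreasing_by simp_wf; have := List.sizeOf_lt_of_mem ‹t ∈ ts›; omega

@[simp]
theorem leaves_leaf (v : V) : (Cotree.leaf v).leaves = [v] := by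
  rw [leaves]

@[simp]
theorem leaves_node (b : Bool) (ts : List (Cotree V)) :
    (Cotree.node b ts).leaves = ts.flatMap leaves := by
  rw [leaves]
  simp [List.flatMap]

@[simp]
theorem subtrees_leaf (v : V) : (Cotree.leaf v).subtrees = [.leaf v] := by
  rw [subtrees]

@[simp]
theorem subtrees_node (b : Bool) (ts : List (Cotree V)) :
    (Cotree.node b ts).subtrees = .node b ts :: ts.flatMap subtrees := by
  rw [subtrees]
  simp [List.flatMap]

@[simp]
theorem adj_leaf (v x y : V) : ¬ (Cotree.leaf v).adj x y := by
  rw [adj]; exact id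

@[simp]
theorem adj_node (b : Bool) (ts : List (Cotree V)) (x y : V) :
    (Cotree.node b ts).adj x y ↔ (∃ t ∈ ts, t.adj x y) ∨
      (b = true ∧ ∃ t ∈ ts, ∃ s ∈ ts, t ≠ s ∧ x ∈ t.leaves ∧ y ∈ s.leaves) := by
  rw [adj]
  simp only [List.mem_attach, true_and, Subtype.exists, exists_prop, ne_eq]

theorem valid_node {b : Bool} {ts : List (Cotree V)} :
    (Cotree.node b ts).valid ↔
      2 ≤ ts.length ∧ ∀ t ∈ ts, t.valid ∧ ∀ b' ts', t = .node b' ts' → b' ≠ b := by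
  rw [valid]
  simp

theorem forced_node {N : Set V} {b : Bool} {ts : List (Cotree V)} :
    (Cotree.node b ts).forced N ↔ full N (.node b ts) ∨
      (b = false ∧ ∀ t ∈ ts, ¬ hollow N t) ∨ (b = true ∧ ∀ t ∈ ts, t.forced N) := by
  rw [forced]
  simp

theorem self_mem_subtrees (T : Cotree V) : T ∈ T.subtrees := by
  cases T <;> simp

theorem leaves_subset_of_mem_subtrees {T u : Cotree V} (h : u ∈ T.subtrees) :
    u.leaves ⊆ T.leaves := by
  induction T using ind with
  | leaf v => simp_all
  | node b ts ih =>
    rcases by simpa using h with rfl | ⟨t, ht, hut⟩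
    · exact List.Subset.refl _
    · rw [leaves_node]
      exact fun v hv => List.mem_flatMap.2 ⟨t, ht, ih t ht hut hv⟩

theorem subtrees_subset_of_mem_subtrees {T u : Cotree V} (h : u ∈ T.subtrees) :
    u.subtrees ⊆ T.subtrees := by
  induction T using ind with
  | leaf v => simp_all
  | node b ts ih =>
    rcases by simpa using h with rfl | ⟨t, ht, hut⟩
    · exact List.Subset.refl _
    · rw [subtrees_node]
      exact fun w hw => List.mem_cons_of_mem _ (List.mem_flatMap.2 ⟨t, ht, ih t ht hut hw⟩)

theorem adj_of_mem_subtrees {T u : Cotree V} {x y : V} (h : u ∈ T.subtrees) (hu : u.adj x y) :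
    T.adj x y := by
  induction T using ind with
  | leaf v => simp_all
  | node b ts ih =>
    rcases by simpa using h with rfl | ⟨t, ht, hut⟩
    · exact hu
    · exact (adj_node b ts x y).2 (.inl ⟨t, ht, ih t ht hut⟩)

theorem mem_leaves_of_adj {T : Cotree V} {x y : V} (h : T.adj x y) :
    x ∈ T.leaves ∧ y ∈ T.leaves := by
  induction T using ind with
  | leaf v => simp_all
  | node b ts ih =>
    simp only [leaves_node, List.mem_flatMap]
    rcases (adj_node b ts x y).1 h with ⟨t, ht, htxy⟩ | ⟨-, t, ht, s, hs, -, hx, hy⟩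
    · exact ⟨⟨t, ht, (ih t ht htxy).1⟩, ⟨t, ht, (ih t ht htxy).2⟩⟩
    · exact ⟨⟨t, ht, hx⟩, ⟨s, hs, hy⟩⟩

theorem adj_symm {T : Cotree V} {x y : V} (h : T.adj x y) : T.adj y x := by
  induction T using ind with
  | leaf v => simp_all
  | node b ts ih =>
    rcases (adj_node b ts x y).1 h with ⟨t, ht, htxy⟩ | ⟨hb, t, ht, s, hs, hts, hx, hy⟩
    · exact (adj_node b ts y x).2 (.inl ⟨t, ht, ih t ht htxy⟩)
    · exact (adj_node b ts y x).2 (.inr ⟨hb, s, hs, t, ht, hts.symm, hy, hx⟩)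

theorem valid_of_mem_subtrees {T u : Cotree V} (hT : T.valid) (h : u ∈ T.subtrees) : u.valid := by
  induction T using ind with
  | leaf v => simp_all
  | node b ts ih =>
    rcases by simpa using h with rfl | ⟨t, ht, hut⟩
    · exact hT
    · exact ih t ht ((valid_node.1 hT).2 t ht).1 hut

theorem exists_mem_leaves {T : Cotree V} (hT : T.valid) : ∃ v, v ∈ T.leaves := by
  induction T using ind with
  | leaf v => exact ⟨v, by simp⟩
  | node b ts ih =>
    obtain ⟨hlen, hts⟩ := valid_node.1 hT
    obtain ⟨t, ht⟩ := List.exists_mem_of_length_pos (by omega : 0 < ts.length)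
    obtain ⟨v, hv⟩ := ih t ht (hts t ht).1
    exact ⟨v, by simpa using ⟨t, ht, hv⟩⟩

theorem hollow.anti {N N' : Set V} {t : Cotree V} (hNN' : N ⊆ N') (h : hollow N' t) :
    hollow N t :=
  fun v hv hvN => h v hv (hNN' hvN)

theorem uniform_leaf (N : Set V) (v : V) : uniform N (.leaf v) := by
  by_cases hv : v ∈ N
  · exact .inl (by simpa [full] using hv)
  · exact .inr (by simpa [hollow] using hv)

theorem exists_mem_children_of_mixed {N : Set V} {u : Cotree V} (hu : mixed N u) {v : V}
    (hv : v ∈ u.leaves) : ∃ c ∈ u.children, v ∈ c.leaves := by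
  cases u with
  | leaf w => exact absurd (uniform_leaf N w) hu
  | node b ts => simpa [children] using hv

theorem exists_not_hollow_child {M N : Set V} {u : Cotree V} (hu : mixed M u)
    (h : ¬ hollow N u) : ∃ c ∈ u.children, ¬ hollow N c := by
  obtain ⟨v, hv, hvN⟩ : ∃ v ∈ u.leaves, v ∈ N := by simpa [hollow] using h
  obtain ⟨c, hc, hvc⟩ := exists_mem_children_of_mixed hu hv
  exact ⟨c, hc, fun hhol => hhol v hvc hvN⟩

theorem not_forced_node_of_hollow {N : Set V} {b : Bool} {ts : List (Cotree V)} {c : Cotree V}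
    (hc : c ∈ ts) (hcv : c.valid) (hhol : hollow N c) (hforced : ¬ forced N c) :
    ¬ forced N (.node b ts) := by
  rw [forced_node]
  rintro (hfull | ⟨-, hall⟩ | ⟨-, hall⟩)
  · obtain ⟨v, hv⟩ := exists_mem_leaves hcv
    exact hhol v hv (hfull v (by simpa using ⟨c, hc, hv⟩))
  · exact hall c hc hhol
  · exact hforced (hall c hc)

theorem not_hollow_of_forced {N : Set V} {t : Cotree V} (ht : t.valid) (hforced : forced N t) :
    ¬ hollow N t := by
  induction t using ind with
  | leaf v =>
    rw [forced] at hforced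
    simpa [hollow] using hforced
  | node b ts ih =>
    intro hhol
    obtain ⟨hlen, hts⟩ := valid_node.1 ht
    obtain ⟨c, hc⟩ := List.exists_mem_of_length_pos (by omega : 0 < ts.length)
    have hchol : hollow N c := fun v hv => hhol v (by simpa using ⟨c, hc, hv⟩)
    exact not_forced_node_of_hollow hc (hts c hc).1 hchol
      (fun hcf => ih c hc (hts c hc).1 hcf hchol) hforced

theorem not_forced_of_hollow_child {N : Set V} {u : Cotree V} (hu : u.valid)
    (h : ∃ c ∈ u.children, hollow N c) : ¬ forced N u := by
  cases u with
  | leaf v => simp [children] at h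
  | node b ts =>
    obtain ⟨c, hc, hhol⟩ := h
    have hcv : c.valid := ((valid_node.1 hu).2 c hc).1
    exact not_forced_node_of_hollow hc hcv hhol (fun hcf => not_hollow_of_forced hcv hcf hhol)

theorem nodup_leaves_of_mem {b : Bool} {ts : List (Cotree V)} (hnd : (node b ts).leaves.Nodup)
    {t : Cotree V} (ht : t ∈ ts) : t.leaves.Nodup :=
  (List.nodup_flatMap.1 (by simpa using hnd)).1 t ht

theorem eq_of_mem_leaves_of_nodup {b : Bool} {ts : List (Cotree V)}
    (hnd : (node b ts).leaves.Nodup) {t s : Cotree V} (ht : t ∈ ts) (hs : s ∈ ts) {v : V}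
    (hvt : v ∈ t.leaves) (hvs : v ∈ s.leaves) : t = s := by
  by_contra hts
  have hdisj := (List.nodup_flatMap.1 (by simpa using hnd)).2
  have : Std.Symm (Function.onFun List.Disjoint (leaves (V := V))) := ⟨fun _ _ h => h.symm⟩
  exact hdisj.forall ht hs hts hvt hvs

theorem adj_of_isLcaNodeLeaf {T w u : Cotree V} {y z : V} (hw : IsLcaNodeLeaf T w u y)
    (hws : w.isSeries) (hz : z ∈ u.leaves) (hyu : y ∉ u.leaves) : T.adj z y := by
  obtain ⟨hwT, huw, hyw, hch⟩ := hw
  obtain ⟨ts, rfl⟩ : ∃ ts, w = .node true ts := by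
    match w, hws with
    | .node true ts, _ => exact ⟨ts, rfl⟩
  rcases by simpa using huw with rfl | ⟨t, ht, hut⟩
  · exact absurd hyw hyu
  obtain ⟨s, hs, hys⟩ : ∃ s ∈ ts, y ∈ s.leaves := by simpa using hyw
  have hts : t ≠ s := by
    rintro rfl
    exact hch t ht ⟨hut, hys⟩
  exact adj_of_mem_subtrees hwT ((adj_node true ts z y).2
    (.inr ⟨rfl, t, ht, s, hs, hts, leaves_subset_of_mem_subtrees hut hz, hys⟩))

theorem exists_isLcaNodeLeaf_of_adj {T u : Cotree V} {z y : V} (hnd : T.leaves.Nodup)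
    (hu : u ∈ T.subtrees) (hz : z ∈ u.leaves) (hyu : y ∉ u.leaves) (h : T.adj z y) :
    ∃ w, IsLcaNodeLeaf T w u y ∧ w.isSeries := by
  induction T using ind with
  | leaf v => simp at h
  | node b ts ih =>
    rcases by simpa using hu with rfl | ⟨t, ht, hut⟩
    · exact absurd (mem_leaves_of_adj h).2 hyu
    have hzt : z ∈ t.leaves := leaves_subset_of_mem_subtrees hut hz
    rcases (adj_node b ts z y).1 h with ⟨t', ht', hadj⟩ | ⟨rfl, t₁, ht₁, t₂, ht₂, hne, hz₁, hy₂⟩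
    · obtain rfl : t' = t := eq_of_mem_leaves_of_nodup hnd ht' ht (mem_leaves_of_adj hadj).1 hzt
      obtain ⟨w, ⟨hwt, huw, hyw, hch⟩, hws⟩ := ih t' ht' (nodup_leaves_of_mem hnd ht') hut hadj
      refine ⟨w, ⟨?_, huw, hyw, hch⟩, hws⟩
      exact subtrees_subset_of_mem_subtrees (by simpa using .inr ⟨t', ht', self_mem_subtrees t'⟩) hwt
    · refine ⟨.node true ts, ⟨self_mem_subtrees _, hu, by simpa using ⟨t₂, ht₂, hy₂⟩, ?_⟩, trivial⟩
      rintro c hc ⟨huc, hyc⟩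
      obtain rfl : c = t₂ := eq_of_mem_leaves_of_nodup hnd hc ht₂ hyc hy₂
      exact hne (eq_of_mem_leaves_of_nodup hnd ht₁ hc hz₁ (leaves_subset_of_mem_subtrees huc hz))

theorem graphPlus_adj_some_some {T : Cotree V} {N : Set V} {a b : V} :
    (graphPlus T N).Adj (some a) (some b) ↔ a ≠ b ∧ T.adj a b := by
  simp only [graphPlus, SimpleGraph.fromRel_adj, ne_eq, Option.some.injEq]
  exact and_congr_right fun _ => or_iff_left_of_imp adj_symm

theorem graphPlus_adj_none_some {T : Cotree V} {N : Set V} {v : V} :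
    (graphPlus T N).Adj none (some v) ↔ v ∈ N := by
  simp [graphPlus]

theorem isCograph_graphPlus_diff_leaves {T u : Cotree V} {N : Set V}
    (hN : ∀ z ∈ u.leaves, ∀ y ∉ u.leaves, y ∈ N ↔ T.adj z y)
    (hcog : IsCograph (graphPlus T N)) :
    IsCograph (graphPlus T (N \ {v | v ∈ u.leaves})) := by
  set H := graphPlus T (N \ {v | v ∈ u.leaves})
  set S : Set (Option V) := insert none (some '' {v | v ∈ u.leaves})
  have hadjS : ∀ y ∉ u.leaves, ∀ a ∈ S, H.Adj (some y) a ↔ y ∈ N := by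
    rintro y hy a (rfl | ⟨z, hz, rfl⟩)
    · rw [H.adj_comm, graphPlus_adj_none_some]
      exact and_iff_left hy
    · rw [graphPlus_adj_some_some, hN z hz y hy]
      exact ⟨fun h => adj_symm h.2, fun h => ⟨fun hyz => hy (hyz ▸ hz), adj_symm h⟩⟩
  have hS : H.IsModule S := by
    rintro (_ | y) hyS a ha b hb hya
    · exact absurd (Set.mem_insert _ _) hyS
    · have hy : y ∉ u.leaves := fun h => hyS (.inr ⟨y, h, rfl⟩)
      exact (hadjS y hy b hb).2 ((hadjS y hy a ha).1 hya)
  have hnone : ∀ a ∈ S, ¬ H.Adj none a := by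
    rintro a (rfl | ⟨z, hz, rfl⟩)
    · exact H.irrefl
    · exact fun h => (graphPlus_adj_none_some.1 h).2 hz
  rw [isCograph_iff_forall_not_isInducedP4] at hcog ⊢
  intro f hf
  have hout : ∀ j k v, f j = none → f k = some v → v ∉ u.leaves := by
    intro j k v hj hk hv
    have hkj := hf.eq_of_isModule hS (Set.mem_insert _ _) hnone hj
      (hk ▸ Or.inr ⟨v, hv, rfl⟩ : f k ∈ S)
    rw [hkj, hj] at hk
    cases hk
  refine hcog f ⟨hf.1, fun j k => ?_⟩
  rw [← hf.2 j k]
  cases hj : f j <;> cases hk : f k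
  · simp only [SimpleGraph.irrefl]
  · rw [graphPlus_adj_none_some, graphPlus_adj_none_some]
    exact ⟨fun h => ⟨h, hout j k _ hj hk⟩, fun h => h.1⟩
  · rw [SimpleGraph.adj_comm, graphPlus_adj_none_some, H.adj_comm, graphPlus_adj_none_some]
    exact ⟨fun h => ⟨h, hout k j _ hk hj⟩, fun h => h.1⟩
  · rw [graphPlus_adj_some_some, graphPlus_adj_some_some]

section InsertionNode

variable {T u : Cotree V} {N : Set V}

theorem IsInsertionNode.exists_hollow_child (h : IsInsertionNode T N u) :
    ∃ c ∈ u.children, hollow N c := by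
  obtain ⟨-, hmix, hunif, -⟩ := h
  obtain ⟨a, ha, haN⟩ : ∃ a ∈ u.leaves, a ∉ N := by
    by_contra! hfull
    exact hmix (.inl hfull)
  obtain ⟨c, hc, hac⟩ := exists_mem_children_of_mixed hmix ha
  exact ⟨c, hc, (hunif c hc).resolve_left fun hfull => haN (hfull a hac)⟩

theorem IsInsertionNode.mem_iff_adj (h : IsInsertionNode T N u) (hnd : T.leaves.Nodup)
    (hNT : ∀ v ∈ N, v ∈ T.leaves) : ∀ z ∈ u.leaves, ∀ y ∉ u.leaves, y ∈ N ↔ T.adj z y := by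
  obtain ⟨huT, -, -, hlca⟩ := h
  intro z hz y hy
  constructor
  · intro hyN
    obtain ⟨w, hw, hws⟩ := (hlca y (hNT y hyN) hy).1 hyN
    exact adj_of_isLcaNodeLeaf hw hws hz hy
  · intro hadj
    exact (hlca y (mem_leaves_of_adj hadj).2 hy).2 (exists_isLcaNodeLeaf_of_adj hnd huT hz hy hadj)

theorem IsInsertionNode.not_hollow_of_isMinimal {Nx : Set V} (h : IsInsertionNode T N u)
    (hnd : T.leaves.Nodup) (hmin : IsMinimalConstrainedCompletion T Nx N) : ¬ hollow Nx u := by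
  intro hhol
  obtain ⟨⟨hNxN, hNT, hcog⟩, hminimal⟩ := hmin
  have hcomp : IsConstrainedCompletion T Nx (N \ {v | v ∈ u.leaves}) :=
    ⟨fun v hv => ⟨hNxN hv, fun hvu => hhol v hvu hv⟩, fun v hv => hNT v hv.1,
      isCograph_graphPlus_diff_leaves (h.mem_iff_adj hnd hNT) hcog⟩
  have heq := hminimal _ Set.sdiff_subset hcomp
  obtain ⟨a, ha, haN⟩ : ∃ a ∈ u.leaves, a ∈ N := by
    by_contra! hhol'
    exact h.2.1 (.inr hhol')
  rw [← heq] at haN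
  exact haN.2 ha

end InsertionNode

end Cotree

theorem stmt_13_general {V : Type u} (T : Cotree V) (Nx : Set V)
    (hval : T.valid) (hnd : T.leaves.Nodup)
    (N' : Set V) (hmin : Cotree.IsMinimalConstrainedCompletion T Nx N')
    (u : Cotree V) (hins : Cotree.IsInsertionNode T N' u) :
    (∃ c ∈ u.children, Cotree.hollow Nx c) ∧ (∃ c ∈ u.children, ¬ Cotree.hollow Nx c) ∧
      ¬ Cotree.hollow Nx u ∧ ¬ Cotree.forced Nx u := by
  have hhollow : ∃ c ∈ u.children, Cotree.hollow Nx c := by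
    obtain ⟨c, hc, hhol⟩ := hins.exists_hollow_child
    exact ⟨c, hc, hhol.anti hmin.1.1⟩
  have hu : ¬ Cotree.hollow Nx u := hins.not_hollow_of_isMinimal hnd hmin
  obtain ⟨huT, hmix, -, -⟩ := hins
  exact ⟨hhollow, Cotree.exists_not_hollow_child hmix hu, hu,
    Cotree.not_forced_of_hollow_child (Cotree.valid_of_mem_subtrees hval huT) hhollow⟩

theorem stmt_13 {V : Type u} (T : Cotree V) (Nx : Set V)
    (hval : T.valid) (hnd : T.leaves.Nodup)
    (hNx : ∀ v ∈ Nx, v ∈ T.leaves) (hmix : Cotree.mixed Nx T)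
    (N' : Set V) (hmin : Cotree.IsMinimalConstrainedCompletion T Nx N')
    (u : Cotree V) (hins : Cotree.IsInsertionNode T N' u) :
    (∃ c ∈ u.children, Cotree.hollow Nx c) ∧ (∃ c ∈ u.children, ¬ Cotree.hollow Nx c) ∧
      ¬ Cotree.hollow Nx u ∧ ¬ Cotree.forced Nx u :=
  stmt_13_general T Nx hval hnd N' hmin u hins
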